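/- Let n ≥ 1 and let A be any word over {0,1} of length 3·2^{n−1}. Then the point η = A^∞ = AAA⋯ ∈ Σ satisfies g_1^{(k·2^n)}(η) = σ^{3k·2^{n−1}}(η) = η for all k ≥ 0; in particular η is a periodic point of the NADS g_{1,∞}. -/
import Mathlib


/-- The symbolic space `Σ = {0,1}^ℕ`; here `x : BinSeq` is 0-indexed, so `x n`
represents the symbol `x_{n+1}` of the paper. -/
abbrev BinSeq : Type := ℕ → Bool

/-- The shift map `σ(x₁x₂x₃⋯) = x₂x₃⋯`. -/
def shift (x : BinSeq) : BinSeq := fun n => x (n + 1)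

/-- The metric `d(x,y) = Σ_{n≥1} |x_n − y_n| / 2^n` on `Σ` (with our 0-indexing, symbol `n`
contributes `1/2^{n+1}`). -/
noncomputable def dS (x y : BinSeq) : ℝ :=
  ∑' n : ℕ, (if x n = y n then (0 : ℝ) else 1) / 2 ^ (n + 1)

/-- `tm n` is the Thue–Morse symbol `ξ_{n+1}`: the parity of the number of ones in the
binary expansion of `n` (i.e. of `(n+1) − 1`); `true` encodes `1` and `false` encodes `0`. -/
def tm (n : ℕ) : Bool := (Nat.digits 2 n).sum % 2 == 1

/-- `g i` is the map `g_{i+1}` of the NADS: `σ` if `ξ_{i+1} = 0` and `σ²` if `ξ_{i+1} = 1`. -/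
def g (i : ℕ) : BinSeq → BinSeq := if tm i then shift ∘ shift else shift

/-- `gComp n = g_1^{(n)} = g_n ∘ g_{n-1} ∘ ⋯ ∘ g_1`. -/
def gComp : ℕ → BinSeq → BinSeq
  | 0 => id
  | n + 1 => g n ∘ gComp n

/-- A set `U ⊆ Σ` is open for the metric `d`. -/
def IsOpenS (U : Set BinSeq) : Prop :=
  ∀ x ∈ U, ∃ ε : ℝ, 0 < ε ∧ ∀ y : BinSeq, dS x y < ε → y ∈ U

/-- `x` is a periodic point of the NADS `g_{1,∞}`: there is `n ≥ 1` with
`g_1^{(nk)}(x) = x` for all `k ≥ 0`. -/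
def IsGPeriodicPt (x : BinSeq) : Prop :=
  ∃ n : ℕ, 1 ≤ n ∧ ∀ k : ℕ, gComp (n * k) x = x

/-- The orbit `orb(x, g_{1,∞}) = {g_1^{(n)}(x) : n ≥ 0}`. -/
def gOrbit (x : BinSeq) : Set BinSeq :=
  Set.range fun n : ℕ => gComp n x

def cnt : ℕ → ℕ
  | 0 => 0
  | m + 1 => cnt m + (if tm m then 1 else 0)

lemma tm_two_mul (i : ℕ) : tm (2 * i) = tm i := by
  rcases Nat.eq_zero_or_pos i with h | h
  · simp [h]
  · have : Nat.digits 2 (2 * i) = (2 * i) % 2 :: Nat.digits 2 ((2 * i) / 2) :=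
      Nat.digits_def' (by norm_num) (by omega)
    simp [tm, this, Nat.mul_div_cancel_left i (by norm_num : 0 < 2)]

lemma tm_two_mul_add_one (i : ℕ) : tm (2 * i + 1) = !tm i := by
  have : Nat.digits 2 (2 * i + 1) = (2 * i + 1) % 2 :: Nat.digits 2 ((2 * i + 1) / 2) :=
    Nat.digits_def' (by norm_num) (by omega)
  have hd : (2 * i + 1) / 2 = i := by omega
  have hm : (2 * i + 1) % 2 = 1 := by omega
  simp only [tm, this, hd, hm, List.sum_cons]
  rcases Nat.mod_two_eq_zero_or_one (Nat.digits 2 i).sum with h | h <;>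
    rw [Nat.add_mod, h] <;> simp

lemma cnt_two_mul (m : ℕ) : cnt (2 * m) = m := by
  induction m with
  | zero => rfl
  | succ m ih =>
    have h1 : 2 * (m + 1) = (2 * m + 1) + 1 := by ring
    rw [h1]
    show cnt (2 * m + 1) + _ = _
    show (cnt (2 * m) + _) + _ = _
    rw [tm_two_mul, tm_two_mul_add_one, ih]
    cases tm m <;> simp

lemma shift_iterate (m : ℕ) (x : BinSeq) (i : ℕ) : shift^[m] x i = x (i + m) := by
  induction m generalizing x i with
  | zero => rfl
  | succ m ih =>
    rw [Function.iterate_succ_apply, ih]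
    show x (i + m + 1) = _
    ring_nf

lemma gComp_eq (m : ℕ) (x : BinSeq) : gComp m x = shift^[m + cnt m] x := by
  induction m with
  | zero => rfl
  | succ m ih =>
    show g m (gComp m x) = _
    rw [ih]
    unfold g
    cases h : tm m <;> simp only [h, cnt, if_true, if_false, Bool.false_eq_true,
      Function.comp_apply] <;> funext i <;>
      simp only [shift, shift_iterate] <;> congr 1 <;> omega


/-- Let `n ≥ 1` and let `A` be any word of length `3·2^{n-1}` over `{0,1}`. Then the
periodic point `η = A^∞` satisfies `g_1^{(k·2^n)}(η) = σ^{3k·2^{n-1}}(η) = η` for all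
`k ≥ 0`; in particular `η` is a periodic point of the NADS `g_{1,∞}`. -/
theorem periodic_word_is_gPeriodic (n : ℕ) (hn : 1 ≤ n) (A : ℕ → Bool) :
    ∀ η : BinSeq, (∀ i : ℕ, η i = A (i % (3 * 2 ^ (n - 1)))) →
      (∀ k : ℕ,
        gComp (k * 2 ^ n) η = shift^[3 * k * 2 ^ (n - 1)] η ∧
        shift^[3 * k * 2 ^ (n - 1)] η = η) ∧
      IsGPeriodicPt η := by
  intro η hη
  have h2 : 2 ^ n = 2 * 2 ^ (n - 1) := by
    conv_lhs => rw [show n = (n - 1) + 1 by omega]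
    ring
  set L := 3 * 2 ^ (n - 1) with hL
  have hshift : ∀ k : ℕ, shift^[k * L] η = η := by
    intro k
    funext i
    rw [shift_iterate, hη, hη, Nat.add_mul_mod_self_right]
  have hmain : ∀ k : ℕ, gComp (k * 2 ^ n) η = shift^[3 * k * 2 ^ (n - 1)] η ∧
      shift^[3 * k * 2 ^ (n - 1)] η = η := by
    intro k
    have he : k * 2 ^ n = 2 * (k * 2 ^ (n - 1)) := by rw [h2]; ring
    have hc : cnt (k * 2 ^ n) = k * 2 ^ (n - 1) := by rw [he, cnt_two_mul]
    constructor
    · rw [gComp_eq, hc]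
      congr 1
      rw [he]; ring
    · have : 3 * k * 2 ^ (n - 1) = k * L := by rw [hL]; ring
      rw [this, hshift]
  refine ⟨hmain, ?_⟩
  exact ⟨2 ^ n, Nat.one_le_two_pow, fun k => by
    rw [Nat.mul_comm, (hmain k).1, (hmain k).2]⟩
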